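/- Suppose for all k ≤ L and all L ∈ ℕ: α^L = Σ_{k=1}^L β^k with β^k supported on S^k, |(α^L)ᵀμ − E[Z]| ≤ c·2^{−Lγ_B}, (β^k)ᵀCβ^k ≤ c·2^{−kγ_V}, and W_k ≤ c·2^{kγ_C} with γ_C > γ_V. Then for every ε > 0 small enough there exist L and sample numbers m_1,…,m_L ∈ ℕ such that the linear unbiased estimator achieves MSE ≤ ε² with cost bounded by c'(ε^{−γ_C/γ_B} + ε^{−2−(γ_C−γ_V)/γ_B}). -/

import Mathlib

open Finset MeasureTheory ProbabilityTheory

/-!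
Choose the level `L` with `2 ^ (L γ_B) ≈ 2c/ε`, so that the squared bias is at most `ε²/4`
and `2 ^ L ≈ ε ^ (-1/γ_B)`. On the levels take `m_k = ⌈K 2 ^ (-k (γ_V + γ_C)/2)⌉`, the
allocation that balances `Var_k / m_k` against `m_k W_k`: both the variance sum and the
sampling cost become geometric series in `2 ^ (k (γ_C - γ_V)/2)`, dominated by their top
terms because `γ_C > γ_V`. Taking `K ≈ ε⁻² 2 ^ (L (γ_C - γ_V)/2)` makes the variance sum
`≤ ε²/2` at sampling cost `≈ ε⁻² 2 ^ (L (γ_C - γ_V))`, while rounding up costs at most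
`∑ W_k ≈ 2 ^ (L γ_C)`.
-/

lemma sum_Icc_pow_le {r : ℝ} (hr : 1 < r) (L : ℕ) :
    ∑ k ∈ Icc 1 L, r ^ k ≤ r / (r - 1) * r ^ L := by
  rw [← Ico_add_one_right_eq_Icc, geom_sum_Ico hr.ne' (by omega)]
  calc (r ^ (L + 1) - r ^ 1) / (r - 1) ≤ r ^ (L + 1) / (r - 1) := by
        gcongr
        linarith
    _ = r / (r - 1) * r ^ L := by ring

lemma sum_Icc_rpow_mul_le {b a : ℝ} (hb : 1 < b) (ha : 0 < a) (L : ℕ) :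
    ∑ k ∈ Icc 1 L, b ^ ((k : ℝ) * a) ≤ b ^ a / (b ^ a - 1) * b ^ ((L : ℝ) * a) := by
  have hpow (n : ℕ) : b ^ ((n : ℝ) * a) = (b ^ a) ^ n := by
    rw [mul_comm, Real.rpow_mul_natCast (by linarith)]
  simp only [hpow]
  exact sum_Icc_pow_le (Real.one_lt_rpow hb ha) L

lemma sum_div_ceil_le (V : ℕ → ℝ) (L : ℕ) {c γ s K : ℝ} (hc : 0 ≤ c) (hK : 0 < K)
    (hV : ∀ k ∈ Icc 1 L, V k ≤ c * 2 ^ (-(k : ℝ) * γ)) :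
    ∑ k ∈ Icc 1 L, V k / ⌈K * 2 ^ (-(k : ℝ) * s)⌉₊
      ≤ c / K * ∑ k ∈ Icc 1 L, (2 : ℝ) ^ ((k : ℝ) * (s - γ)) := by
  rw [mul_sum]
  refine sum_le_sum fun k hk => ?_
  have hrate : (2 : ℝ) ^ (-(k : ℝ) * γ) / 2 ^ (-(k : ℝ) * s) = 2 ^ ((k : ℝ) * (s - γ)) := by
    rw [← Real.rpow_sub two_pos]; ring_nf
  calc V k / ⌈K * 2 ^ (-(k : ℝ) * s)⌉₊
      ≤ c * 2 ^ (-(k : ℝ) * γ) / (K * 2 ^ (-(k : ℝ) * s)) :=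
        div_le_div₀ (by positivity) (hV k hk) (by positivity) (Nat.le_ceil _)
    _ = c / K * 2 ^ ((k : ℝ) * (s - γ)) := by rw [mul_div_mul_comm, hrate]

lemma sum_ceil_mul_le (W : ℕ → ℝ) (L : ℕ) {c γ s K : ℝ} (hc : 0 ≤ c) (hK : 0 < K)
    (hW : ∀ k ∈ Icc 1 L, W k ≤ c * 2 ^ ((k : ℝ) * γ)) :
    ∑ k ∈ Icc 1 L, (⌈K * 2 ^ (-(k : ℝ) * s)⌉₊ : ℝ) * W k
      ≤ c * K * ∑ k ∈ Icc 1 L, (2 : ℝ) ^ ((k : ℝ) * (γ - s))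
        + c * ∑ k ∈ Icc 1 L, (2 : ℝ) ^ ((k : ℝ) * γ) := by
  rw [mul_sum, mul_sum, ← sum_add_distrib]
  refine sum_le_sum fun k hk => ?_
  have hrate : (2 : ℝ) ^ (-(k : ℝ) * s) * 2 ^ ((k : ℝ) * γ) = 2 ^ ((k : ℝ) * (γ - s)) := by
    rw [← Real.rpow_add two_pos]; ring_nf
  calc (⌈K * 2 ^ (-(k : ℝ) * s)⌉₊ : ℝ) * W k
      ≤ ⌈K * 2 ^ (-(k : ℝ) * s)⌉₊ * (c * 2 ^ ((k : ℝ) * γ)) :=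
        mul_le_mul_of_nonneg_left (hW k hk) (Nat.cast_nonneg _)
    _ ≤ (K * 2 ^ (-(k : ℝ) * s) + 1) * (c * 2 ^ ((k : ℝ) * γ)) :=
        mul_le_mul_of_nonneg_right (Nat.ceil_lt_add_one (by positivity)).le (by positivity)
    _ = c * K * 2 ^ ((k : ℝ) * (γ - s)) + c * 2 ^ ((k : ℝ) * γ) := by
        linear_combination c * K * hrate

lemma exists_samples_le (V W : ℕ → ℕ → ℝ) {c γV γC : ℝ} (hc : 0 < c) (hγC : 0 < γC)
    (hCV : γV < γC)
    (hV : ∀ L k : ℕ, 1 ≤ k → k ≤ L → V L k ≤ c * 2 ^ (-(k : ℝ) * γV))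
    (hW : ∀ L k : ℕ, 1 ≤ k → k ≤ L → W L k ≤ c * 2 ^ ((k : ℝ) * γC)) :
    ∃ C₁ > 0, ∃ C₂ > 0, ∀ (L : ℕ) (ε : ℝ), 0 < ε → ∃ m : ℕ → ℕ, (∀ k, 1 ≤ m k) ∧
      ∑ k ∈ Icc 1 L, V L k / (m k : ℝ) ≤ ε ^ 2 / 2 ∧
      ∑ k ∈ Icc 1 L, (m k : ℝ) * W L k
        ≤ C₁ / ε ^ 2 * 2 ^ ((L : ℝ) * (γC - γV)) + C₂ * 2 ^ ((L : ℝ) * γC) := by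
  set δ := (γC - γV) / 2
  have hδ : 0 < δ := by simp only [δ]; linarith
  set A := (2 : ℝ) ^ δ / (2 ^ δ - 1)
  set B := (2 : ℝ) ^ γC / (2 ^ γC - 1)
  have hA : 0 < A := div_pos (by positivity) (by linarith [Real.one_lt_rpow one_lt_two hδ])
  have hB : 0 < B := div_pos (by positivity) (by linarith [Real.one_lt_rpow one_lt_two hγC])
  refine ⟨2 * c ^ 2 * A ^ 2, by positivity, c * B, by positivity, fun L ε hε => ?_⟩
  set s := (γV + γC) / 2
  have hsV : s - γV = δ := by ring
  have hsC : γC - s = δ := by ring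
  set K := 2 * c * A * 2 ^ ((L : ℝ) * δ) / ε ^ 2
  have hK : 0 < K := by positivity
  have hV' (k) (hk : k ∈ Icc 1 L) := hV L k (mem_Icc.1 hk).1 (mem_Icc.1 hk).2
  have hW' (k) (hk : k ∈ Icc 1 L) := hW L k (mem_Icc.1 hk).1 (mem_Icc.1 hk).2
  refine ⟨fun k => ⌈K * 2 ^ (-(k : ℝ) * s)⌉₊, fun k => Nat.ceil_pos.2 (by positivity), ?_, ?_⟩
  · calc _ ≤ c / K * ∑ k ∈ Icc 1 L, (2 : ℝ) ^ ((k : ℝ) * (s - γV)) :=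
          sum_div_ceil_le (V L) L hc.le hK hV'
      _ ≤ c / K * (A * 2 ^ ((L : ℝ) * δ)) := by
          rw [hsV]; gcongr; exact sum_Icc_rpow_mul_le one_lt_two hδ L
      _ = ε ^ 2 / 2 := by simp only [K]; field_simp
  · have hδδ : (2 : ℝ) ^ ((L : ℝ) * δ) * 2 ^ ((L : ℝ) * δ) = 2 ^ ((L : ℝ) * (γC - γV)) := by
      rw [← Real.rpow_add two_pos]; simp only [δ]; ring_nf
    calc _ ≤ c * K * ∑ k ∈ Icc 1 L, (2 : ℝ) ^ ((k : ℝ) * (γC - s))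
            + c * ∑ k ∈ Icc 1 L, (2 : ℝ) ^ ((k : ℝ) * γC) :=
          sum_ceil_mul_le (W L) L hc.le hK hW'
      _ ≤ c * K * (A * 2 ^ ((L : ℝ) * δ)) + c * (B * 2 ^ ((L : ℝ) * γC)) := by
          rw [hsC]
          gcongr
          · exact sum_Icc_rpow_mul_le one_lt_two hδ L
          · exact sum_Icc_rpow_mul_le one_lt_two hγC L
      _ = _ := by simp only [K]; rw [← hδδ]; field_simp

lemma exists_nat_rpow_mul_mem_Icc {γ y : ℝ} (hγ : 0 < γ) (hy : 1 < y) :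
    ∃ L : ℕ, 1 ≤ L ∧ y ≤ (2 : ℝ) ^ ((L : ℝ) * γ) ∧ (2 : ℝ) ^ ((L : ℝ) * γ) ≤ 2 ^ γ * y := by
  set x := Real.logb 2 y / γ
  have hx : 0 < x := div_pos (Real.logb_pos one_lt_two hy) hγ
  have h2x : (2 : ℝ) ^ (x * γ) = y := by
    rw [div_mul_cancel₀ _ hγ.ne', Real.rpow_logb two_pos (by norm_num) (by linarith)]
  have hceil := Nat.ceil_lt_add_one hx.le
  refine ⟨⌈x⌉₊, Nat.ceil_pos.2 hx, ?_, ?_⟩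
  · rw [← h2x]
    exact Real.rpow_le_rpow_of_exponent_le one_le_two
      (mul_le_mul_of_nonneg_right (Nat.le_ceil x) hγ.le)
  · rw [← h2x, ← Real.rpow_add two_pos]
    exact Real.rpow_le_rpow_of_exponent_le one_le_two (by nlinarith)

lemma rpow_mul_le_mul_rpow_neg {b u t D ε : ℝ} (hb : 0 ≤ b) (ht : 0 ≤ t) (hD : 0 ≤ D)
    (hε : 0 < ε) (hu : b ^ u ≤ D / ε) : b ^ (u * t) ≤ D ^ t * ε ^ (-t) := by
  calc b ^ (u * t) = (b ^ u) ^ t := Real.rpow_mul hb u t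
    _ ≤ (D / ε) ^ t := Real.rpow_le_rpow (by positivity) hu ht
    _ = D ^ t * ε ^ (-t) := by
        rw [Real.div_rpow hD hε.le, Real.rpow_neg hε.le, div_eq_mul_inv]

theorem exists_level_samples_of_rates (bias : ℕ → ℝ) (V W : ℕ → ℕ → ℝ) {c γB γV γC : ℝ}
    (hc : 0 < c) (hγB : 0 < γB) (hγC : 0 < γC) (hCV : γV < γC)
    (hbias : ∀ L : ℕ, 1 ≤ L → |bias L| ≤ c * (2 : ℝ) ^ (-(L : ℝ) * γB))
    (hV : ∀ L k : ℕ, 1 ≤ k → k ≤ L → V L k ≤ c * 2 ^ (-(k : ℝ) * γV))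
    (hW : ∀ L k : ℕ, 1 ≤ k → k ≤ L → W L k ≤ c * 2 ^ ((k : ℝ) * γC)) :
    ∃ c' > 0, ∃ ε₀ > 0, ∀ ε : ℝ, 0 < ε → ε ≤ ε₀ →
      ∃ (L : ℕ) (m : ℕ → ℕ), 1 ≤ L ∧ (∀ k ∈ Icc 1 L, 1 ≤ m k) ∧
        bias L ^ 2 + ∑ k ∈ Icc 1 L, V L k / (m k : ℝ) ≤ ε ^ 2 ∧
        ∑ k ∈ Icc 1 L, (m k : ℝ) * W L k
          ≤ c' * (ε ^ (-γC / γB) + ε ^ (-2 - (γC - γV) / γB)) := by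
  obtain ⟨C₁, hC₁, C₂, hC₂, hsamples⟩ := exists_samples_le V W hc hγC hCV hV hW
  set D := 2 ^ γB * (2 * c)
  set t₁ := γC / γB
  set t₂ := (γC - γV) / γB
  refine ⟨C₁ * D ^ t₂ + C₂ * D ^ t₁, by positivity, c, hc, fun ε hε hεc => ?_⟩
  obtain ⟨L, hL, hlow, hup⟩ :=
    exists_nat_rpow_mul_mem_Icc hγB (y := 2 * c / ε) (by rw [one_lt_div hε]; linarith)
  obtain ⟨m, hm, hvar, hcost⟩ := hsamples L ε hε
  have hbias_sq : bias L ^ 2 ≤ ε ^ 2 / 4 := by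
    have hdecay : c * 2 ^ (-(L : ℝ) * γB) ≤ ε / 2 := by
      rw [neg_mul, Real.rpow_neg zero_le_two, ← div_eq_mul_inv, div_le_iff₀ (by positivity)]
      rw [div_le_iff₀ hε] at hlow
      linarith
    nlinarith [sq_abs (bias L), abs_nonneg (bias L), hbias L hL]
  have hup' : (2 : ℝ) ^ ((L : ℝ) * γB) ≤ D / ε := by rwa [mul_div_assoc]
  have hpow (a : ℝ) (ha : 0 ≤ a) : (2 : ℝ) ^ ((L : ℝ) * a) ≤ D ^ (a / γB) * ε ^ (-(a / γB)) := by
    rw [show (L : ℝ) * a = (L : ℝ) * γB * (a / γB) by field_simp]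
    exact rpow_mul_le_mul_rpow_neg zero_le_two (div_nonneg ha hγB.le) (by positivity) hε hup'
  have hε₂ : ε ^ (-2 - t₂) = ε ^ (-t₂) / ε ^ 2 := by
    rw [sub_eq_add_neg, Real.rpow_add hε, Real.rpow_neg hε.le 2, Real.rpow_two]; ring
  refine ⟨L, m, hL, fun k _ => hm k, by nlinarith, hcost.trans ?_⟩
  calc C₁ / ε ^ 2 * 2 ^ ((L : ℝ) * (γC - γV)) + C₂ * 2 ^ ((L : ℝ) * γC)
      ≤ C₁ / ε ^ 2 * (D ^ t₂ * ε ^ (-t₂)) + C₂ * (D ^ t₁ * ε ^ (-t₁)) := by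
        gcongr
        · exact hpow _ (by linarith)
        · exact hpow _ hγC.le
    _ ≤ (C₁ * D ^ t₂ + C₂ * D ^ t₁) * (ε ^ (-γC / γB) + ε ^ (-2 - t₂)) := by
        rw [neg_div, hε₂]
        have hgap : 0 ≤ C₁ * D ^ t₂ * ε ^ (-t₁) + C₂ * D ^ t₁ * (ε ^ (-t₂) / ε ^ 2) := by
          positivity
        linear_combination hgap

theorem stmt_14_general {Ω : Type*} [MeasurableSpace Ω] (P : Measure Ω)
    (Z : Ω → ℝ) (Zs : ℕ → Ω → ℝ)
    (S : ℕ → ℕ → Finset ℕ) (β : ℕ → ℕ → ℕ → ℝ) (αv : ℕ → ℕ → ℝ) (W : ℕ → ℕ → ℝ)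
    (c γB γV γC : ℝ) (hc : 0 < c) (hγB : 0 < γB) (hγC : 0 < γC)
    (hCV : γV < γC)
    (hM1 : ∀ L : ℕ, 1 ≤ L →
      |(∑ ℓ ∈ Finset.Icc 1 L, αv L ℓ * ∫ ω, Zs ℓ ω ∂P) - ∫ ω, Z ω ∂P|
        ≤ c * (2 : ℝ) ^ (-(L : ℝ) * γB))
    (hM2 : ∀ L k : ℕ, 1 ≤ k → k ≤ L →
      variance (fun ω => ∑ ℓ ∈ S L k, β L k ℓ * Zs ℓ ω) P
        ≤ c * (2 : ℝ) ^ (-(k : ℝ) * γV))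
    (hM3 : ∀ L k : ℕ, 1 ≤ k → k ≤ L → W L k ≤ c * (2 : ℝ) ^ ((k : ℝ) * γC)) :
    ∃ c' > 0, ∃ ε₀ > 0, ∀ ε : ℝ, 0 < ε → ε ≤ ε₀ →
      ∃ (L : ℕ) (m : ℕ → ℕ), 1 ≤ L ∧ (∀ k ∈ Finset.Icc 1 L, 1 ≤ m k) ∧
        ((∑ ℓ ∈ Finset.Icc 1 L, αv L ℓ * ∫ ω, Zs ℓ ω ∂P) - ∫ ω, Z ω ∂P) ^ 2
            + ∑ k ∈ Finset.Icc 1 L,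
                variance (fun ω => ∑ ℓ ∈ S L k, β L k ℓ * Zs ℓ ω) P / (m k : ℝ)
          ≤ ε ^ 2 ∧
        ∑ k ∈ Finset.Icc 1 L, (m k : ℝ) * W L k
          ≤ c' * (ε ^ (-γC / γB) + ε ^ (-2 - (γC - γV) / γB)) :=
  exists_level_samples_of_rates _ _ W hc hγB hγC hCV hM1 hM2 hM3

/-- Theorem 2.3, case `γ_C > γ_V`: under the bias assumption (M1) on the linear
combination `α^L`, the group-variance decay (M2) for the coefficients `β^k`
(with `(β^k)ᵀCβ^k = Var(∑_{ℓ∈S^k} β^k_ℓ Z_ℓ)`), and the group-cost growth (M3),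
for every small `ε > 0` there are a level `L` and sample numbers `m_k ≥ 1` such that
the linear unbiased estimator (whose MSE, by independence of the sample groups, equals
the squared bias plus `∑_k Var(∑_{ℓ∈S^k} β^k_ℓ Z_ℓ)/m_k`) achieves MSE `≤ ε²` with
cost `∑_k m_k W_k ≤ c'(ε^{−γ_C/γ_B} + ε^{−2−(γ_C−γ_V)/γ_B})`. -/
theorem stmt_14 {Ω : Type*} [MeasurableSpace Ω] (P : Measure Ω) [IsProbabilityMeasure P]
    (Z : Ω → ℝ) (Zs : ℕ → Ω → ℝ) (hZ : Integrable Z P) (hZs : ∀ ℓ, MemLp (Zs ℓ) 2 P)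
    (S : ℕ → ℕ → Finset ℕ) (β : ℕ → ℕ → ℕ → ℝ) (αv : ℕ → ℕ → ℝ) (W : ℕ → ℕ → ℝ)
    (c γB γV γC : ℝ) (hc : 0 < c) (hγB : 0 < γB) (hγV : 0 < γV) (hγC : 0 < γC)
    (hCV : γV < γC) (hWpos : ∀ L k, 0 < W L k)
    (hM0 : ∀ L ℓ, αv L ℓ = ∑ k ∈ Finset.Icc 1 L, β L k ℓ)
    (hM0' : ∀ L k ℓ, ℓ ∉ S L k → β L k ℓ = 0)
    (hM1 : ∀ L : ℕ, 1 ≤ L →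
      |(∑ ℓ ∈ Finset.Icc 1 L, αv L ℓ * ∫ ω, Zs ℓ ω ∂P) - ∫ ω, Z ω ∂P|
        ≤ c * (2 : ℝ) ^ (-(L : ℝ) * γB))
    (hM2 : ∀ L k : ℕ, 1 ≤ k → k ≤ L →
      variance (fun ω => ∑ ℓ ∈ S L k, β L k ℓ * Zs ℓ ω) P
        ≤ c * (2 : ℝ) ^ (-(k : ℝ) * γV))
    (hM3 : ∀ L k : ℕ, 1 ≤ k → k ≤ L → W L k ≤ c * (2 : ℝ) ^ ((k : ℝ) * γC)) :
    ∃ c' > 0, ∃ ε₀ > 0, ∀ ε : ℝ, 0 < ε → ε ≤ ε₀ →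
      ∃ (L : ℕ) (m : ℕ → ℕ), 1 ≤ L ∧ (∀ k ∈ Finset.Icc 1 L, 1 ≤ m k) ∧
        ((∑ ℓ ∈ Finset.Icc 1 L, αv L ℓ * ∫ ω, Zs ℓ ω ∂P) - ∫ ω, Z ω ∂P) ^ 2
            + ∑ k ∈ Finset.Icc 1 L,
                variance (fun ω => ∑ ℓ ∈ S L k, β L k ℓ * Zs ℓ ω) P / (m k : ℝ)
          ≤ ε ^ 2 ∧
        ∑ k ∈ Finset.Icc 1 L, (m k : ℝ) * W L k
          ≤ c' * (ε ^ (-γC / γB) + ε ^ (-2 - (γC - γV) / γB)) :=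
  stmt_14_general P Z Zs S β αv W c γB γV γC hc hγB hγC hCV hM1 hM2 hM3
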